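/- arXiv:1103.5478 — 2 statements merged into one kernel-verified Lean document; each statement's English description precedes it below -/
import Mathlib

section
/- For every t ≥ 2 and every q ∈ (ℝ_+^*)^t, the k-th derivative of the density of ⟨q,X⟩ vanishes at 0: f_{⟨q,X⟩}^{(k)}(0) = 0 for all k = 0, 1, …, t−2. -/
open MeasureTheory ProbabilityTheory Finset

/-- The law of `(X_1, …, X_t)` where the `X_i` are i.i.d. `Exp(1)`. -/
noncomputable def expLaw (t : ℕ) : Measure (Fin t → ℝ) :=
  Measure.pi fun _ => expMeasure 1

/-!
Let `F v = ∫₀ᵛ f`. Since `X ≥ 0` almost surely, `⟨q,X⟩ ≤ v` forces `X_i ≤ v / q_i` for every `i`,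
so `0 ≤ F v ≤ P(⟨q,X⟩ ≤ v) ≤ v ^ t / ∏ q_i`; here `f ≥ 0` on `[0, ∞)` because the law of `⟨q,X⟩`
charges every open set meeting `(0, ∞)`. A function with `|F y| ≤ C y ^ m` for `y > 0` and
`F 0 = 0` has `F⁽ᵏ⁾ 0 = 0` for all `k < m`: by induction and the mean value theorem, every interval
`[a, b] ⊆ (0, ∞)` contains a point where `|F⁽ᵏ⁾| ≤ K b ^ m / (b - a) ^ k`, and along such points
in `[b / 2, b]` the difference quotients of `F⁽ᵏ⁾` at `0` are `O(b ^ (m - k - 1))`. As `F' = f`,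
this gives `f⁽ᵏ⁾ 0 = 0` for `k ≤ t - 2`.
-/

open Filter Topology

instance : IsProbabilityMeasure (expMeasure 1) := isProbabilityMeasure_expMeasure one_pos

lemma expMeasure_pos_of_isOpen {r : ℝ} (hr : 0 < r) {s : Set ℝ} (hs : IsOpen s)
    (hs₀ : (s ∩ Set.Ioi 0).Nonempty) : 0 < expMeasure r s := by
  have hpdf : Set.Ioi 0 ⊆ {x | gammaPDF 1 r x ≠ 0} := fun x hx => by
    simpa [gammaPDF] using gammaPDFReal_pos one_pos hr hx
  refine pos_iff_ne_zero.2 fun h => (hs.inter isOpen_Ioi).measure_ne_zero volume hs₀ ?_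
  rw [expMeasure, gammaMeasure, withDensity_apply_eq_zero' (f := gammaPDF 1 r)
    (measurable_gammaPDFReal 1 r).ennreal_ofReal.aemeasurable] at h
  exact measure_mono_null
    (Set.subset_inter (Set.inter_subset_right.trans hpdf) Set.inter_subset_left) h

lemma expMeasure_one_le_volume : expMeasure 1 ≤ volume := by
  conv_rhs => rw [← withDensity_one (μ := volume)]
  refine withDensity_mono (ae_of_all _ fun x => ?_)
  rw [Pi.one_apply, gammaPDF_eq]
  split_ifs with hx
  · simpa [ENNReal.ofReal_le_one] using Real.exp_le_one_iff.2 (neg_nonpos.2 hx)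
  · simp

lemma ae_expMeasure_nonneg (r : ℝ) : ∀ᵐ x ∂expMeasure r, 0 ≤ x := by
  simp only [ae_iff, not_le]
  exact (withDensity_apply _ measurableSet_Iio).trans (lintegral_exponentialPDF_of_nonpos le_rfl)

lemma ae_expLaw_nonneg (t : ℕ) : ∀ᵐ x ∂expLaw t, ∀ i, 0 ≤ x i :=
  ae_all_iff.2 fun _ => Measure.tendsto_eval_ae_ae.eventually (ae_expMeasure_nonneg 1)

lemma expLaw_pos_of_isOpen {t : ℕ} {W : Set (Fin t → ℝ)} (hW : IsOpen W) {x : Fin t → ℝ}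
    (hx : x ∈ W) (hx₀ : ∀ i, 0 < x i) : 0 < expLaw t W := by
  obtain ⟨r, hr, hball⟩ := Metric.isOpen_iff.1 hW x hx
  rw [ball_pi x hr] at hball
  refine lt_of_lt_of_le ?_ (measure_mono hball)
  rw [expLaw, Measure.pi_pi, CanonicallyOrderedAdd.prod_pos]
  exact fun i _ => expMeasure_pos_of_isOpen one_pos Metric.isOpen_ball
    ⟨x i, Metric.mem_ball_self hr, hx₀ i⟩

lemma map_inner_expLaw_pos {t : ℕ} (ht : 0 < t) {q : Fin t → ℝ} (hq : ∀ i, 0 < q i)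
    {U : Set ℝ} (hU : IsOpen U) (hU₀ : (U ∩ Set.Ioi 0).Nonempty) :
    0 < Measure.map (fun x : Fin t → ℝ => ∑ i, q i * x i) (expLaw t) U := by
  obtain ⟨y, hyU, hy⟩ := hU₀
  have hS : Continuous fun x : Fin t → ℝ => ∑ i, q i * x i := by fun_prop
  have hq₀ : 0 < ∑ i, q i := Finset.sum_pos (fun i _ => hq i) ⟨⟨0, ht⟩, Finset.mem_univ _⟩
  rw [Measure.map_apply hS.measurable hU.measurableSet]
  refine expLaw_pos_of_isOpen (hU.preimage hS) (x := fun _ => y / ∑ i, q i) ?_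
    fun _ => div_pos hy hq₀
  simp only [Set.mem_preimage, ← Finset.sum_mul]
  rwa [mul_div_cancel₀ _ hq₀.ne']

lemma map_inner_expLaw_Iic_le {t : ℕ} {q : Fin t → ℝ} (hq : ∀ i, 0 < q i) {v : ℝ}
    (hv : 0 ≤ v) :
    Measure.map (fun x : Fin t → ℝ => ∑ i, q i * x i) (expLaw t) (Set.Iic v) ≤
      ENNReal.ofReal ((∏ i, q i)⁻¹ * v ^ t) := by
  have hS : Measurable fun x : Fin t → ℝ => ∑ i, q i * x i := by fun_prop
  have hbox : (fun x : Fin t → ℝ => ∑ i, q i * x i) ⁻¹' Set.Iic v ⊆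
      {x | ¬∀ i, 0 ≤ x i} ∪ Set.univ.pi fun i => Set.Icc 0 (v / q i) := by
    intro x hx
    by_cases hx₀ : ∀ i, 0 ≤ x i
    · refine Or.inr fun i _ => ⟨hx₀ i, (le_div_iff₀' (hq i)).2 ?_⟩
      exact (Finset.single_le_sum (fun j _ => mul_nonneg (hq j).le (hx₀ j))
        (Finset.mem_univ i)).trans hx
    · exact Or.inl hx₀
  rw [Measure.map_apply hS measurableSet_Iic]
  calc expLaw t _
      ≤ expLaw t {x | ¬∀ i, 0 ≤ x i} + expLaw t (Set.univ.pi fun i => Set.Icc 0 (v / q i)) :=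
        (measure_mono hbox).trans (measure_union_le _ _)
    _ = ∏ i, expMeasure 1 (Set.Icc 0 (v / q i)) := by
        rw [ae_iff.1 (ae_expLaw_nonneg t), zero_add, expLaw, Measure.pi_pi]
    _ ≤ ∏ i, ENNReal.ofReal (v / q i) := by
        gcongr with i
        exact (expMeasure_one_le_volume _).trans (by rw [Real.volume_Icc, sub_zero])
    _ = ENNReal.ofReal ((∏ i, q i)⁻¹ * v ^ t) := by
        rw [← ENNReal.ofReal_prod_of_nonneg fun i _ => div_nonneg hv (hq i).le,
          Finset.prod_div_distrib, Finset.prod_const, Finset.card_univ, Fintype.card_fin,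
          div_eq_inv_mul]

/-- No differentiability is needed: where `g` is not differentiable, `deriv g` is `0`. -/
lemma exists_mem_Icc_abs_deriv_mul_le {g : ℝ → ℝ} {a b : ℝ} (hab : a < b) :
    ∃ c ∈ Set.Icc a b, |deriv g c| * (b - a) ≤ |g b - g a| := by
  by_cases hg : ∀ x ∈ Set.Icc a b, DifferentiableAt ℝ g x
  · obtain ⟨c, hc, hc'⟩ := exists_deriv_eq_slope g hab
      (fun x hx => (hg x hx).continuousAt.continuousWithinAt)
      (fun x hx => (hg x (Set.Ioo_subset_Icc_self hx)).differentiableWithinAt)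
    refine ⟨c, Set.Ioo_subset_Icc_self hc, le_of_eq ?_⟩
    rw [hc', abs_div, abs_of_pos (sub_pos.2 hab), div_mul_cancel₀ _ (sub_pos.2 hab).ne']
  · push Not at hg
    obtain ⟨x, hx, hgx⟩ := hg
    exact ⟨x, hx, by simp [deriv_zero_of_not_differentiableAt hgx]⟩

lemma deriv_eq_zero_of_tendsto_slope {α : Type*} {l : Filter α} [l.NeBot] {g : ℝ → ℝ} {x : ℝ}
    {ξ : α → ℝ} (hξ : Tendsto ξ l (𝓝[≠] x)) (h : Tendsto (fun a => slope g x (ξ a)) l (𝓝 0)) :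
    deriv g x = 0 := by
  by_cases hg : DifferentiableAt ℝ g x
  · exact tendsto_nhds_unique ((hasDerivAt_iff_tendsto_slope.1 hg.hasDerivAt).comp hξ) h
  · exact deriv_zero_of_not_differentiableAt hg

lemma exists_abs_iterate_deriv_mul_le {f : ℝ → ℝ} {C : ℝ} {m : ℕ}
    (hf : ∀ y, 0 < y → |f y| ≤ C * y ^ m) (k : ℕ) :
    ∃ K, 0 ≤ K ∧ ∀ a b, 0 < a → a < b →
      ∃ ξ ∈ Set.Icc a b, |deriv^[k] f ξ| * (b - a) ^ k ≤ K * b ^ m := by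
  induction k with
  | zero =>
    refine ⟨|C|, abs_nonneg C, fun a b ha hab => ⟨b, Set.right_mem_Icc.2 hab.le, ?_⟩⟩
    have hb := ha.trans hab
    simpa using (hf b hb).trans (mul_le_mul_of_nonneg_right (le_abs_self C) (by positivity))
  | succ k ih =>
    obtain ⟨K, hK, hK'⟩ := ih
    refine ⟨2 * 3 ^ (k + 1) * K, by positivity, fun a b ha hab => ?_⟩
    set d := (b - a) / 3 with hd
    have hd₀ : 0 < d := by linarith
    obtain ⟨ξ₁, hξ₁, hξ₁'⟩ := hK' a (a + d) ha (by linarith)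
    obtain ⟨ξ₂, hξ₂, hξ₂'⟩ := hK' (b - d) b (by linarith) (by linarith)
    rw [add_sub_cancel_left] at hξ₁'
    rw [sub_sub_cancel] at hξ₂'
    have hgap : d ≤ ξ₂ - ξ₁ := by linarith [hξ₁.2, hξ₂.1]
    obtain ⟨c, hc, hc'⟩ := exists_mem_Icc_abs_deriv_mul_le (g := deriv^[k] f)
      (hd₀.trans_le hgap |> sub_pos.1)
    refine ⟨c, ⟨hξ₁.1.trans hc.1, hc.2.trans hξ₂.2⟩, ?_⟩
    have hpow : (a + d) ^ m ≤ b ^ m := pow_le_pow_left₀ (by linarith) (by linarith) m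
    rw [Function.iterate_succ_apply']
    have hba : b - a = 3 * d := by linarith
    calc |deriv (deriv^[k] f) c| * (b - a) ^ (k + 1)
        = 3 ^ (k + 1) * (|deriv (deriv^[k] f) c| * d * d ^ k) := by
          rw [hba, mul_pow, pow_succ d]; ring
      _ ≤ 3 ^ (k + 1) * (|deriv (deriv^[k] f) c| * (ξ₂ - ξ₁) * d ^ k) := by gcongr
      _ ≤ 3 ^ (k + 1) * ((|deriv^[k] f ξ₂| + |deriv^[k] f ξ₁|) * d ^ k) := by
          gcongr; exact hc'.trans (abs_sub _ _)
      _ = 3 ^ (k + 1) * (|deriv^[k] f ξ₂| * d ^ k + |deriv^[k] f ξ₁| * d ^ k) := by ring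
      _ ≤ 3 ^ (k + 1) * (K * b ^ m + K * b ^ m) := by
          gcongr ?_ * (?_ + ?_)
          exact hξ₁'.trans (mul_le_mul_of_nonneg_left hpow hK)
      _ = 2 * 3 ^ (k + 1) * K * b ^ m := by ring

lemma iterate_deriv_eq_zero_of_abs_le_pow {f : ℝ → ℝ} {C : ℝ} {m : ℕ}
    (hf : ∀ y, 0 < y → |f y| ≤ C * y ^ m) (h₀ : f 0 = 0) {k : ℕ} (hk : k < m) :
    deriv^[k] f 0 = 0 := by
  induction k with
  | zero => exact h₀
  | succ k ih =>
    obtain ⟨j, rfl⟩ := Nat.exists_eq_add_of_lt hk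
    obtain ⟨K, hK₀, hK⟩ := exists_abs_iterate_deriv_mul_le hf k
    have hξ : ∀ b : ℝ, ∃ ξ, 0 < b → ξ ∈ Set.Icc (b / 2) b ∧
        |deriv^[k] f ξ| * (b / 2) ^ k ≤ K * b ^ (k + 1 + j + 1) := fun b => by
      by_cases hb : 0 < b
      · obtain ⟨ξ, hξ, hξ'⟩ := hK (b / 2) b (by positivity) (by linarith)
        exact ⟨ξ, fun _ => ⟨hξ, by rwa [sub_half] at hξ'⟩⟩
      · exact ⟨0, fun h => absurd h hb⟩
    choose ξ hξ using hξ
    have hξ_pos : ∀ b, 0 < b → 0 < ξ b := fun b hb => (half_pos hb).trans_le (hξ b hb).1.1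
    have hslope : ∀ b, 0 < b →
        ‖slope (deriv^[k] f) 0 (ξ b)‖ ≤ 2 ^ (k + 1) * K * b ^ (j + 1) := fun b hb => by
      obtain ⟨⟨hξb, -⟩, hbound⟩ := hξ b hb
      rw [slope_def_field, ih (by omega), sub_zero, sub_zero, Real.norm_eq_abs, abs_div,
        abs_of_pos (hξ_pos b hb), div_le_iff₀ (hξ_pos b hb)]
      refine le_of_mul_le_mul_right ?_ (pow_pos (half_pos hb) k)
      calc |deriv^[k] f (ξ b)| * (b / 2) ^ k ≤ K * b ^ (k + 1 + j + 1) := hbound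
        _ = 2 ^ (k + 1) * K * b ^ (j + 1) * (b / 2) * (b / 2) ^ k := by
            rw [div_pow]; field_simp; ring
        _ ≤ 2 ^ (k + 1) * K * b ^ (j + 1) * ξ b * (b / 2) ^ k := by gcongr
    rw [Function.iterate_succ_apply']
    refine deriv_eq_zero_of_tendsto_slope (l := 𝓝[>] 0) (ξ := ξ) ?_ ?_
    · refine tendsto_nhdsWithin_of_tendsto_nhds_of_eventually_within _ ?_
        (eventually_nhdsWithin_of_forall fun b hb => (hξ_pos b hb).ne')
      refine squeeze_zero' (eventually_nhdsWithin_of_forall fun b hb => (hξ_pos b hb).le)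
        (eventually_nhdsWithin_of_forall fun b hb => (hξ b hb).1.2) ?_
      exact tendsto_id.mono_left nhdsWithin_le_nhds
    · refine squeeze_zero_norm' (eventually_nhdsWithin_of_forall hslope) ?_
      have hcont : Continuous fun b : ℝ => 2 ^ (k + 1) * K * b ^ (j + 1) := by fun_prop
      simpa using (hcont.tendsto 0).mono_left nhdsWithin_le_nhds

lemma nonneg_of_forall_isOpen_withDensity_pos {α : Type*} [TopologicalSpace α]
    [MeasurableSpace α] [OpensMeasurableSpace α] {μ : Measure α} {f : α → ℝ} (hf : Continuous f)
    {y : α} (h : ∀ U, IsOpen U → y ∈ U → 0 < μ.withDensity (fun z => ENNReal.ofReal (f z)) U) :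
    0 ≤ f y := by
  by_contra! hy
  have hU : IsOpen {z | f z < 0} := isOpen_lt hf continuous_const
  refine (h _ hU hy).ne' ?_
  rw [withDensity_apply _ hU.measurableSet]
  exact setLIntegral_eq_zero hU.measurableSet fun z hz => ENNReal.ofReal_eq_zero.2 hz.le

lemma ofReal_intervalIntegral_eq_withDensity_Ioc {f : ℝ → ℝ} {a b : ℝ}
    (hf : IntegrableOn f (Set.Ioc a b)) (hab : a ≤ b) (hf₀ : ∀ x ∈ Set.Ioc a b, 0 ≤ f x) :
    ENNReal.ofReal (∫ x in a..b, f x) =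
      volume.withDensity (fun x => ENNReal.ofReal (f x)) (Set.Ioc a b) := by
  rw [withDensity_apply _ measurableSet_Ioc, intervalIntegral.integral_of_le hab,
    ofReal_integral_eq_lintegral_ofReal hf (ae_restrict_of_forall_mem measurableSet_Ioc hf₀)]

/-- for `t ≥ 2` and `q ∈ (ℝ₊^*)^t`, the `k`-th derivative of the (continuous
version of the) density of `⟨q,X⟩` vanishes at `0`, for every `k = 0, 1, …, t−2`. -/
theorem iteratedDeriv_density_at_zero (t : ℕ) (ht : 2 ≤ t) (q : Fin t → ℝ)
    (hq : ∀ i, 0 < q i)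
    (f : ℝ → ℝ) (hf_cont : Continuous f)
    (hf_density : Measure.map (fun v : Fin t → ℝ => ∑ i, q i * v i) (expLaw t) =
      MeasureTheory.volume.withDensity fun y => ENNReal.ofReal (f y)) :
    ∀ k : ℕ, k ≤ t - 2 → iteratedDeriv k f 0 = 0 := by
  intro k hk
  have hf_nonneg : ∀ y, 0 ≤ y → 0 ≤ f y := fun y hy =>
    nonneg_of_forall_isOpen_withDensity_pos hf_cont fun U hU hyU => by
      rw [← hf_density]
      exact map_inner_expLaw_pos (by omega) hq hU
        (mem_closure_iff.1 (by rwa [closure_Ioi]) U hU hyU)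
  have hF : ∀ v, 0 < v → |∫ x in 0..v, f x| ≤ (∏ i, q i)⁻¹ * v ^ t := fun v hv => by
    have hF_nonneg : 0 ≤ ∫ x in 0..v, f x :=
      intervalIntegral.integral_nonneg hv.le fun x hx => hf_nonneg x hx.1
    rw [abs_of_nonneg hF_nonneg, ← ENNReal.ofReal_le_ofReal_iff
      (mul_nonneg (inv_nonneg.2 (prod_nonneg fun i _ => (hq i).le)) (pow_nonneg hv.le t))]
    calc ENNReal.ofReal (∫ x in 0..v, f x)
        = Measure.map (fun v : Fin t → ℝ => ∑ i, q i * v i) (expLaw t) (Set.Ioc 0 v) := by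
          rw [hf_density]
          exact ofReal_intervalIntegral_eq_withDensity_Ioc hf_cont.integrableOn_Ioc hv.le
            fun x hx => hf_nonneg x hx.1.le
      _ ≤ Measure.map (fun v : Fin t → ℝ => ∑ i, q i * v i) (expLaw t) (Set.Iic v) :=
          measure_mono Set.Ioc_subset_Iic_self
      _ ≤ ENNReal.ofReal ((∏ i, q i)⁻¹ * v ^ t) := map_inner_expLaw_Iic_le hq hv.le
  have hderiv : deriv (fun v => ∫ x in 0..v, f x) = f := funext (hf_cont.deriv_integral f 0)
  have h := iterate_deriv_eq_zero_of_abs_le_pow hF intervalIntegral.integral_same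
    (k := k + 1) (by omega)
  rwa [Function.iterate_succ_apply, hderiv, ← iteratedDeriv_eq_iterate] at h
end

section
/- Let p be a real polynomial of degree n ≥ 0, let d ∈ ℝ with d ≠ 0, and let c > 0. Then the equation e^x + d·e^{cx} = p(x) has at most n + 2 distinct real solutions. -/
/-!
Put `f x = e^x + d e^{cx} - p(x)` and `n = deg p`. Its `(n+1)`-st derivative is
`e^x + d c^{n+1} e^{cx}`, which vanishes at most once: `e^{(1-c)x} = -d c^{n+1}` has at most one
solution when `c ≠ 1`, and none when `c = 1` unless `d = -1`. By Rolle's theorem each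
differentiation loses at most one zero, so `f` has at most `n + 2` zeros. In the remaining case
`c = 1`, `d = -1` the equation is `p(x) = 0`, with at most `n` solutions.
-/

open Set Real
open scoped ContDiff

theorem Set.encard_le_of_forall_finset_card_le {α : Type*} {S : Set α} {k : ℕ}
    (h : ∀ s : Finset α, ↑s ⊆ S → s.card ≤ k) : S.encard ≤ k := by
  by_contra! hlt
  obtain ⟨t, hts, ht⟩ := exists_subset_encard_eq (Order.add_one_le_of_lt hlt)
  have htfin : t.Finite := finite_of_encard_eq_coe ht
  have hcard := h htfin.toFinset (by simpa using hts)
  rw [htfin.encard_eq_coe_toFinset_card] at ht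
  norm_cast at ht
  omega

theorem encard_zeros_le_encard_zeros_deriv_add_one {f : ℝ → ℝ} (hf : Differentiable ℝ f) :
    {x | f x = 0}.encard ≤ {x | deriv f x = 0}.encard + 1 := by
  obtain hinf | hfin := {x | deriv f x = 0}.finite_or_infinite.symm
  · simp [hinf.encard_eq]
  rw [hfin.encard_eq_coe_toFinset_card]
  refine encard_le_of_forall_finset_card_le fun s hs => Finset.card_le_of_interleaved ?_
  intro x hx y hy hxy _
  obtain ⟨z, hz, hz0⟩ := exists_deriv_eq_zero hxy hf.continuous.continuousOn
    ((hs hx).trans (hs hy).symm)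
  exact ⟨z, hfin.mem_toFinset.2 hz0, hz⟩

theorem encard_zeros_le_encard_zeros_iterate_deriv_add {f : ℝ → ℝ} (hf : ContDiff ℝ ∞ f)
    (k : ℕ) : {x | f x = 0}.encard ≤ {x | deriv^[k] f x = 0}.encard + k := by
  induction k generalizing f with
  | zero => simp
  | succ k ih =>
    obtain ⟨hf_diff, hf_deriv⟩ := contDiff_infty_iff_deriv.1 hf
    calc {x | f x = 0}.encard ≤ {x | deriv f x = 0}.encard + 1 :=
          encard_zeros_le_encard_zeros_deriv_add_one hf_diff
      _ ≤ {x | deriv^[k] (deriv f) x = 0}.encard + k + 1 := by gcongr; exact ih hf_deriv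
      _ = {x | deriv^[k + 1] f x = 0}.encard + (k + 1 : ℕ) := by
          rw [Function.iterate_succ_apply, add_assoc]; norm_cast

section ExpAddMulExpSubEval

variable (b c : ℝ) (p : Polynomial ℝ)

theorem contDiff_exp_add_mul_exp_sub_eval :
    ContDiff ℝ ∞ fun x => exp x + b * exp (c * x) - p.eval x := by
  have hp : ContDiff ℝ ∞ fun x => p.eval x := by
    simpa only [Polynomial.coe_aeval_eq_eval] using p.contDiff_aeval (𝕜 := ℝ) ∞
  fun_prop

theorem hasDerivAt_exp_add_mul_exp_sub_eval (x : ℝ) :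
    HasDerivAt (fun x => exp x + b * exp (c * x) - p.eval x)
      (exp x + b * c * exp (c * x) - p.derivative.eval x) x := by
  have hcx : HasDerivAt (fun x => c * x) c x := by simpa using (hasDerivAt_id x).const_mul c
  exact (((hasDerivAt_exp x).add (hcx.exp.const_mul b)).sub (p.hasDerivAt x)).congr_deriv
    (by ring)

theorem iterate_deriv_exp_add_mul_exp_sub_eval (k : ℕ) :
    deriv^[k] (fun x => exp x + b * exp (c * x) - p.eval x)
      = fun x => exp x + b * c ^ k * exp (c * x) - (Polynomial.derivative^[k] p).eval x := by
  induction k generalizing b p with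
  | zero => simp
  | succ k ih =>
    rw [Function.iterate_succ_apply, funext (hasDerivAt_exp_add_mul_exp_sub_eval b c p · |>.deriv),
      ih, Function.iterate_succ_apply, pow_succ', mul_assoc]

end ExpAddMulExpSubEval

theorem subsingleton_exp_add_mul_exp_zeros {b c : ℝ} (h : c ≠ 1 ∨ b ≠ -1) :
    {x | exp x + b * exp (c * x) = 0}.Subsingleton := by
  have key : ∀ x, exp x + b * exp (c * x) = 0 ↔ exp ((1 - c) * x) = -b := by
    intro x
    rw [sub_mul, one_mul, exp_sub, div_eq_iff (exp_pos _).ne', neg_mul, eq_neg_iff_add_eq_zero]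
  intro x hx y hy
  rw [mem_ofPred_eq, key] at hx hy
  rcases eq_or_ne c 1 with rfl | hc
  · rw [sub_self, zero_mul, exp_zero] at hx
    exact (h.resolve_left (not_not.2 rfl) (by linarith)).elim
  · exact mul_left_cancel₀ (sub_ne_zero.2 hc.symm) (exp_injective (hx.trans hy.symm))

theorem encard_exp_add_mul_exp_eq_eval_le {c d : ℝ} (hcd : c ≠ 1 ∨ d ≠ -1)
    (p : Polynomial ℝ) :
    {x | exp x + d * exp (c * x) = p.eval x}.encard ≤ p.natDegree + 2 := by
  set n := p.natDegree
  have hzeros : {x | exp x + d * exp (c * x) = p.eval x}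
      = {x | (fun x => exp x + d * exp (c * x) - p.eval x) x = 0} := by
    simp only [sub_eq_zero]
  have htop : {x | deriv^[n + 1] (fun x => exp x + d * exp (c * x) - p.eval x) x = 0}
      = {x | exp x + d * c ^ (n + 1) * exp (c * x) = 0} := by
    simp [iterate_deriv_exp_add_mul_exp_sub_eval,
      Polynomial.iterate_derivative_eq_zero (Nat.lt_succ_self n)]
  have hcd' : c ≠ 1 ∨ d * c ^ (n + 1) ≠ -1 := by
    rcases eq_or_ne c 1 with rfl | hc
    · simpa using hcd
    · exact .inl hc
  calc _ ≤ {x | deriv^[n + 1] (fun x => exp x + d * exp (c * x) - p.eval x) x = 0}.encard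
          + (n + 1 : ℕ) := by
        rw [hzeros]
        exact encard_zeros_le_encard_zeros_iterate_deriv_add
          (contDiff_exp_add_mul_exp_sub_eval d c p) _
    _ ≤ 1 + (n + 1 : ℕ) := by
        rw [htop]
        gcongr
        exact encard_le_one_iff_subsingleton.2 (subsingleton_exp_add_mul_exp_zeros hcd')
    _ = n + 2 := by push_cast; ring

theorem exp_sum_eq_poly_solutions_general (p : Polynomial ℝ) (hp : p ≠ 0) (d : ℝ)
    (c : ℝ) :
    {x : ℝ | Real.exp x + d * Real.exp (c * x) = p.eval x}.Finite ∧
      {x : ℝ | Real.exp x + d * Real.exp (c * x) = p.eval x}.ncard ≤ p.natDegree + 2 := by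
  rw [← encard_le_coe_iff_finite_ncard_le]
  by_cases hcd : c = 1 ∧ d = -1
  · obtain ⟨rfl, rfl⟩ := hcd
    have hroots : {x | exp x + -1 * exp (1 * x) = p.eval x} = ↑p.roots.toFinset := by
      ext x
      simp [Polynomial.mem_roots hp, eq_comm]
    rw [hroots, encard_coe_eq_coe_finsetCard, Nat.cast_le]
    exact (Multiset.toFinset_card_le _).trans (p.card_roots'.trans (Nat.le_add_right _ _))
  · exact_mod_cast encard_exp_add_mul_exp_eq_eval_le (not_and_or.1 hcd) p

/-- if `p` is a real polynomial of degree `n ≥ 0` (i.e. `p ≠ 0`), `d ≠ 0` and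
`c > 0`, then the equation `e^x + d·e^{cx} = p(x)` has at most `n + 2` distinct real
solutions. -/
theorem exp_sum_eq_poly_solutions (p : Polynomial ℝ) (hp : p ≠ 0) (d : ℝ) (hd : d ≠ 0)
    (c : ℝ) (hc : 0 < c) :
    {x : ℝ | Real.exp x + d * Real.exp (c * x) = p.eval x}.Finite ∧
      {x : ℝ | Real.exp x + d * Real.exp (c * x) = p.eval x}.ncard ≤ p.natDegree + 2 :=
  exp_sum_eq_poly_solutions_general p hp d c
end
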